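/- arXiv:1805.06151 — 2 statements merged into one kernel-verified Lean document; each statement's English description precedes it below -/
import Mathlib

section
/- Let G be a finite weighted graph with distinct edge weights, F its minimum spanning forest, and e ∈ F a tree edge whose removal splits its tree T into components T₀ and T₁. Then the minimum spanning forest of G ∖ {e} is obtained from F ∖ {e} by adding the minimum-weight edge of G ∖ {e} connecting T₀ and T₁, if such an edge exists, and is F ∖ {e} otherwise. -/
/-- `F` is a spanning forest of the graph with edge set `E`: it is a subset of `E`,
acyclic, and has the same reachability relation as `E`. -/
def IsSpanningForest (V : Type) (E F : Finset (Sym2 V)) : Prop :=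
  F ⊆ E ∧ (SimpleGraph.fromEdgeSet (↑F : Set (Sym2 V))).IsAcyclic ∧
    ∀ u v : V, (SimpleGraph.fromEdgeSet (↑E : Set (Sym2 V))).Reachable u v ↔
      (SimpleGraph.fromEdgeSet (↑F : Set (Sym2 V))).Reachable u v

/-- `F` is a minimum spanning forest of the graph with edge set `E` and weights `w`. -/
def IsMSF (V : Type) (w : Sym2 V → ℝ) (E F : Finset (Sym2 V)) : Prop :=
  IsSpanningForest V E F ∧
    ∀ F' : Finset (Sym2 V), IsSpanningForest V E F' → ∑ e ∈ F, w e ≤ ∑ e ∈ F', w e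

/-! Deleting the tree edge `e = s(u, v)` splits its tree into the components `T₀ ∋ u` and
`T₁ ∋ v` of `F ∖ {e}`. A spanning forest `F₂` of `G ∖ {e}` in which `u` and `v` are connected
contains, on its `u`–`v` path, an edge `g` from `T₀` to `T₁`; exchanging `g` for `e` gives a
spanning forest of `G`, so minimality of `F` yields `w(F) - w(e) ≤ w(F₂) - w(g) ≤ w(F₂) - w(f₀)`.
If no edge of `G ∖ {e}` joins `T₀` and `T₁`, then `u` and `v` are disconnected in every spanning
forest of `G ∖ {e}`, and adding `e` back to it gives the comparison with `F` directly. -/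

open SimpleGraph

namespace SimpleGraph

variable {V : Type*}

lemma Reachable.of_forall_adj {G H : SimpleGraph V} (h : ∀ ⦃a b⦄, G.Adj a b → H.Reachable a b)
    {x y : V} (hxy : G.Reachable x y) : H.Reachable x y := by
  obtain ⟨W⟩ := hxy
  induction W with
  | nil => rfl
  | cons hab _ ih => exact (h hab).trans ih

lemma Reachable.sup_edge_cases {G : SimpleGraph V} {x y a b : V}
    (h : (G ⊔ edge x y).Reachable a b) :
    G.Reachable a b ∨ G.Reachable a x ∧ G.Reachable y b ∨ G.Reachable a y ∧ G.Reachable x b := by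
  obtain ⟨W⟩ := h
  induction W with
  | nil => exact .inl .rfl
  | cons hac _ ih =>
    rcases hac with hac | hac
    · have := hac.reachable
      grind [Reachable.trans]
    · obtain ⟨⟨rfl, rfl⟩ | ⟨rfl, rfl⟩, -⟩ := (edge_adj ..).1 hac <;>
        grind [Reachable.trans, Reachable.symm, Reachable.refl]

lemma reachable_fromEdgeSet_of_mem {s : Set (Sym2 V)} {a b : V} (h : s(a, b) ∈ s) :
    (fromEdgeSet s).Reachable a b := by
  obtain rfl | hab := eq_or_ne a b
  · rfl
  · exact ((fromEdgeSet_adj s).2 ⟨h, hab⟩).reachable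

lemma fromEdgeSet_insert (x y : V) (s : Set (Sym2 V)) :
    fromEdgeSet (insert s(x, y) s) = fromEdgeSet s ⊔ edge x y := by
  rw [Set.insert_eq, fromEdgeSet_union, sup_comm, edge]

/-- For `H = F ∖ {e}` these are the edges between `T₀ ∋ u` and `T₁ ∋ v`. -/
def Reconnects (H : SimpleGraph V) (u v : V) (g : Sym2 V) : Prop :=
  ∃ a b, g = s(a, b) ∧ H.Reachable u a ∧ H.Reachable v b

lemma Reconnects.reachable {H : SimpleGraph V} {s : Set (Sym2 V)}
    {u v : V} {g : Sym2 V} (hg : H.Reconnects u v g) (hle : H ≤ fromEdgeSet s) (hgs : g ∈ s) :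
    (fromEdgeSet s).Reachable u v := by
  obtain ⟨a, b, rfl, hua, hvb⟩ := hg
  exact ((hua.mono hle).trans (reachable_fromEdgeSet_of_mem hgs)).trans (hvb.mono hle).symm

lemma IsAcyclic.not_reachable_deleteEdges_of_mem_edges {G : SimpleGraph V} (hG : G.IsAcyclic)
    {u v : V} {P : G.Walk u v} (hP : P.IsPath) {e : Sym2 V} (he : e ∈ P.edges) :
    ¬(G.deleteEdges {e}).Reachable u v := by
  classical
  rintro ⟨W⟩
  -- `P` is the only path from `u` to `v`, so the path extracted from `W` is `P` and uses `e`
  have hWP : (W.mapLe (G.deleteEdges_le {e})).toPath = ⟨P, hP⟩ :=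
    (hG.subsingleton_path u v).elim ..
  have heW : e ∈ ((W.mapLe (G.deleteEdges_le {e})).toPath : G.Walk u v).edges := by
    rwa [hWP]
  have := Walk.edges_toPath_subset_edges _ heW
  rw [Walk.edges_mapLe_eq_edges] at this
  simpa using W.edges_subset_edgeSet this

end SimpleGraph

section

variable {V : Type} {E H : Finset (Sym2 V)}

lemma isSpanningForest_iff :
    IsSpanningForest V E H ↔ H ⊆ E ∧ (fromEdgeSet (↑H : Set (Sym2 V))).IsAcyclic ∧
      ∀ x y, s(x, y) ∈ E → (fromEdgeSet (↑H : Set (Sym2 V))).Reachable x y := by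
  refine ⟨fun ⟨hsub, hac, hreach⟩ => ⟨hsub, hac, fun x y hxy => ?_⟩,
    fun ⟨hsub, hac, hE⟩ => ⟨hsub, hac, fun x y => ⟨?_, (·.mono (fromEdgeSet_mono hsub))⟩⟩⟩
  · exact (hreach x y).1 (reachable_fromEdgeSet_of_mem hxy)
  · exact Reachable.of_forall_adj fun a b hab => hE a b ((fromEdgeSet_adj _).1 hab).1

variable [DecidableEq V]

lemma fromEdgeSet_erase (g : Sym2 V) (S : Finset (Sym2 V)) :
    fromEdgeSet (↑(S.erase g) : Set (Sym2 V)) =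
      (fromEdgeSet (↑S : Set (Sym2 V))).deleteEdges {g} := by
  rw [Finset.coe_erase, fromEdgeSet_sdiff]
  rfl

namespace IsSpanningForest

variable {x y p q : V}

lemma insert_of_reachable (hH : IsSpanningForest V E H)
    (hxy : (fromEdgeSet (↑H : Set (Sym2 V))).Reachable x y) :
    IsSpanningForest V (insert s(x, y) E) H := by
  obtain ⟨hsub, hac, hreach⟩ := isSpanningForest_iff.1 hH
  refine isSpanningForest_iff.2 ⟨hsub.trans (Finset.subset_insert _ _), hac, fun a b hab => ?_⟩
  rcases Finset.mem_insert.1 hab with hab | hab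
  · obtain ⟨rfl, rfl⟩ | ⟨rfl, rfl⟩ := Sym2.eq_iff.1 hab
    exacts [hxy, hxy.symm]
  · exact hreach a b hab

lemma insert_of_not_reachable (hH : IsSpanningForest V E H)
    (hxy : ¬(fromEdgeSet (↑H : Set (Sym2 V))).Reachable x y) :
    IsSpanningForest V (insert s(x, y) E) (insert s(x, y) H) := by
  obtain ⟨hsub, hac, hreach⟩ := isSpanningForest_iff.1 hH
  have hle : fromEdgeSet (↑H : Set (Sym2 V)) ≤ fromEdgeSet (↑(insert s(x, y) H) : Set (Sym2 V)) :=
    fromEdgeSet_mono (Finset.coe_subset.2 (Finset.subset_insert _ _))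
  refine isSpanningForest_iff.2 ⟨Finset.insert_subset_insert _ hsub, ?_, fun a b hab => ?_⟩
  · rw [Finset.coe_insert, fromEdgeSet_insert]
    exact hac.sup_edge_of_not_reachable hxy
  · rcases Finset.mem_insert.1 hab with hab | hab
    · exact reachable_fromEdgeSet_of_mem (by simp [hab])
    · exact (hreach a b hab).mono hle

lemma erase_of_notMem (hH : IsSpanningForest V E H) {g : Sym2 V} (hg : g ∉ H) :
    IsSpanningForest V (E.erase g) H := by
  obtain ⟨hsub, hac, hreach⟩ := isSpanningForest_iff.1 hH
  exact isSpanningForest_iff.2 ⟨fun f hf => Finset.mem_erase.2 ⟨fun h => hg (h ▸ hf), hsub hf⟩,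
    hac, fun a b hab => hreach a b (Finset.mem_of_mem_erase hab)⟩

lemma exchange (hH : IsSpanningForest V E H) (hpq : s(p, q) ∈ H) (hxy : s(x, y) ∈ E)
    (hnr : ¬(fromEdgeSet (↑(H.erase s(p, q)) : Set (Sym2 V))).Reachable x y) :
    IsSpanningForest V E (insert s(x, y) (H.erase s(p, q))) := by
  obtain ⟨hsub, hac, hreach⟩ := isSpanningForest_iff.1 hH
  set H' := insert s(x, y) (H.erase s(p, q))
  have hle : fromEdgeSet (↑(H.erase s(p, q)) : Set (Sym2 V)) ≤ fromEdgeSet (↑H' : Set (Sym2 V)) :=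
    fromEdgeSet_mono (Finset.coe_subset.2 (Finset.subset_insert _ _))
  have hxy' : (fromEdgeSet (↑H' : Set (Sym2 V))).Reachable x y :=
    reachable_fromEdgeSet_of_mem (Finset.mem_insert_self _ _)
  -- `x` and `y` were joined in `H` through `s(p, q)`, so `p` and `q` are joined through `s(x, y)`
  have hpq' : (fromEdgeSet (↑H' : Set (Sym2 V))).Reachable p q := by
    have h := hreach x y hxy
    rw [← Finset.insert_erase hpq, Finset.coe_insert, fromEdgeSet_insert] at h
    rcases h.sup_edge_cases with h | ⟨h₁, h₂⟩ | ⟨h₁, h₂⟩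
    · exact absurd h hnr
    · exact ((h₁.mono hle).symm.trans hxy').trans (h₂.mono hle).symm
    · exact ((h₂.mono hle).trans hxy'.symm).trans (h₁.mono hle)
  refine isSpanningForest_iff.2 ⟨Finset.insert_subset hxy ((Finset.erase_subset _ _).trans hsub),
    ?_, fun a b hab => (hreach a b hab).of_forall_adj fun c d hcd => ?_⟩
  · rw [Finset.coe_insert, fromEdgeSet_insert]
    refine IsAcyclic.sup_edge_of_not_reachable hnr (hac.anti (fromEdgeSet_mono ?_))
    exact Finset.coe_subset.2 (Finset.erase_subset _ _)
  · by_cases hcd' : s(c, d) = s(p, q)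
    · obtain ⟨rfl, rfl⟩ | ⟨rfl, rfl⟩ := Sym2.eq_iff.1 hcd'
      exacts [hpq', hpq'.symm]
    · exact reachable_fromEdgeSet_of_mem (Finset.mem_insert_of_mem
        (Finset.mem_erase.2 ⟨hcd', ((fromEdgeSet_adj _).1 hcd).1⟩))

end IsSpanningForest

lemma not_reachable_fromEdgeSet_erase {F : Finset (Sym2 V)}
    (hF : (fromEdgeSet (↑F : Set (Sym2 V))).IsAcyclic) {u v : V} (he : s(u, v) ∈ F) (huv : u ≠ v) :
    ¬(fromEdgeSet (↑(F.erase s(u, v)) : Set (Sym2 V))).Reachable u v := by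
  rw [fromEdgeSet_erase]
  exact isAcyclic_iff_forall_adj_isBridge.1 hF ((fromEdgeSet_adj _).2 ⟨he, huv⟩)

namespace IsSpanningForest

variable {F F₂ : Finset (Sym2 V)} {u v p q : V}

lemma reachable_erase_or_reconnects (hF : IsSpanningForest V E F) (he : s(u, v) ∈ F)
    (hpq : s(p, q) ∈ E) :
    (fromEdgeSet (↑(F.erase s(u, v)) : Set (Sym2 V))).Reachable p q ∨
      (fromEdgeSet (↑(F.erase s(u, v)) : Set (Sym2 V))).Reconnects u v s(p, q) := by
  have h := (isSpanningForest_iff.1 hF).2.2 p q hpq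
  rw [← Finset.insert_erase he, Finset.coe_insert, fromEdgeSet_insert] at h
  rcases h.sup_edge_cases with h | ⟨h₁, h₂⟩ | ⟨h₁, h₂⟩
  · exact .inl h
  · exact .inr ⟨p, q, rfl, h₁.symm, h₂⟩
  · exact .inr ⟨q, p, Sym2.eq_swap, h₂, h₁.symm⟩

lemma erase_of_forall_not_reconnects (hF : IsSpanningForest V E F) (he : s(u, v) ∈ F)
    (hno : ∀ g ∈ E.erase s(u, v),
      ¬(fromEdgeSet (↑(F.erase s(u, v)) : Set (Sym2 V))).Reconnects u v g) :
    IsSpanningForest V (E.erase s(u, v)) (F.erase s(u, v)) := by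
  obtain ⟨hsub, hac, -⟩ := isSpanningForest_iff.1 hF
  refine isSpanningForest_iff.2 ⟨Finset.erase_subset_erase _ hsub,
    hac.anti (fromEdgeSet_mono (Finset.coe_subset.2 (Finset.erase_subset _ _))), fun p q hpq => ?_⟩
  exact (hF.reachable_erase_or_reconnects he (Finset.mem_of_mem_erase hpq)).resolve_right
    (hno _ hpq)

lemma insert_erase_of_reconnects (hF : IsSpanningForest V E F) (he : s(u, v) ∈ F) (huv : u ≠ v)
    {f : Sym2 V} (hf : f ∈ E.erase s(u, v))
    (hfr : (fromEdgeSet (↑(F.erase s(u, v)) : Set (Sym2 V))).Reconnects u v f) :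
    IsSpanningForest V (E.erase s(u, v)) (insert f (F.erase s(u, v))) := by
  have hnr := not_reachable_fromEdgeSet_erase hF.2.1 he huv
  obtain ⟨a, b, rfl, hua, hvb⟩ := hfr
  have hab : ¬(fromEdgeSet (↑(F.erase s(u, v)) : Set (Sym2 V))).Reachable a b :=
    fun h => hnr ((hua.trans h).trans hvb.symm)
  refine (hF.exchange he (Finset.mem_of_mem_erase hf) hab).erase_of_notMem ?_
  simpa using (Finset.ne_of_mem_erase hf).symm

lemma exists_reconnects_exchange (hF : IsSpanningForest V E F) (he : s(u, v) ∈ F) (huv : u ≠ v)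
    (hF₂ : IsSpanningForest V (E.erase s(u, v)) F₂)
    (hr : (fromEdgeSet (↑F₂ : Set (Sym2 V))).Reachable u v) :
    ∃ p q, s(p, q) ∈ F₂ ∧ (fromEdgeSet (↑(F.erase s(u, v)) : Set (Sym2 V))).Reconnects u v s(p, q) ∧
      IsSpanningForest V E (insert s(u, v) (F₂.erase s(p, q))) := by
  obtain ⟨P, hP⟩ := hr.exists_isPath
  obtain ⟨⟨⟨p, q⟩, hpq⟩, hdP, hp, hq⟩ := P.exists_boundary_dart
    {x | (fromEdgeSet (↑(F.erase s(u, v)) : Set (Sym2 V))).Reachable u x} .rfl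
    (not_reachable_fromEdgeSet_erase hF.2.1 he huv)
  have hpqF₂ : s(p, q) ∈ F₂ := ((fromEdgeSet_adj _).1 hpq).1
  refine ⟨p, q, hpqF₂, ?_, ?_⟩
  · exact (hF.reachable_erase_or_reconnects he (Finset.mem_of_mem_erase (hF₂.1 hpqF₂))).resolve_left
      fun h => hq (hp.trans h)
  · have hEF₂ : IsSpanningForest V E F₂ := by
      simpa [Finset.insert_erase (hF.1 he)] using hF₂.insert_of_reachable hr
    refine hEF₂.exchange hpqF₂ (hF.1 he) ?_
    rw [fromEdgeSet_erase]
    exact hF₂.2.1.not_reachable_deleteEdges_of_mem_edges hP (List.mem_map_of_mem hdP)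

end IsSpanningForest

namespace IsMSF

variable {F : Finset (Sym2 V)} {w : Sym2 V → ℝ} {u v : V}

lemma erase_of_forall_not_reconnects (hF : IsMSF V w E F) (he : s(u, v) ∈ F) (huv : u ≠ v)
    (hno : ∀ g ∈ E.erase s(u, v),
      ¬(fromEdgeSet (↑(F.erase s(u, v)) : Set (Sym2 V))).Reconnects u v g) :
    IsMSF V w (E.erase s(u, v)) (F.erase s(u, v)) := by
  have hspan := hF.1.erase_of_forall_not_reconnects he hno
  refine ⟨hspan, fun F₂ hF₂ => ?_⟩
  have hnr : ¬(fromEdgeSet (↑F₂ : Set (Sym2 V))).Reachable u v := fun h =>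
    not_reachable_fromEdgeSet_erase hF.1.2.1 he huv ((hspan.2.2 u v).1 ((hF₂.2.2 u v).2 h))
  have hspan' := hF₂.insert_of_not_reachable hnr
  rw [Finset.insert_erase (hF.1.1 he)] at hspan'
  have hle := hF.2 _ hspan'
  rw [Finset.sum_insert (fun h => by simpa using hF₂.1 h),
    ← Finset.add_sum_erase _ _ he] at hle
  linarith

lemma insert_erase_of_reconnects (hF : IsMSF V w E F) (he : s(u, v) ∈ F) (huv : u ≠ v)
    {f : Sym2 V} (hf : f ∈ E.erase s(u, v))
    (hfr : (fromEdgeSet (↑(F.erase s(u, v)) : Set (Sym2 V))).Reconnects u v f)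
    (hmin : ∀ g ∈ E.erase s(u, v),
      (fromEdgeSet (↑(F.erase s(u, v)) : Set (Sym2 V))).Reconnects u v g → w f ≤ w g) :
    IsMSF V w (E.erase s(u, v)) (insert f (F.erase s(u, v))) := by
  have hnr := not_reachable_fromEdgeSet_erase hF.1.2.1 he huv
  have hfF : f ∉ F.erase s(u, v) := fun h => hnr (hfr.reachable le_rfl h)
  refine ⟨hF.1.insert_erase_of_reconnects he huv hf hfr, fun F₂ hF₂ => ?_⟩
  have hr : (fromEdgeSet (↑F₂ : Set (Sym2 V))).Reachable u v :=
    (hF₂.2.2 u v).1 (hfr.reachable (fromEdgeSet_mono (Finset.coe_subset.2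
      (Finset.erase_subset_erase _ hF.1.1))) hf)
  obtain ⟨p, q, hpq, hpqr, hex⟩ := hF.1.exists_reconnects_exchange he huv hF₂ hr
  have hle := hF.2 _ hex
  rw [Finset.sum_insert (fun h => by simpa using hF₂.1 (Finset.mem_of_mem_erase h)),
    ← Finset.add_sum_erase _ _ he] at hle
  rw [Finset.sum_insert hfF, ← Finset.add_sum_erase _ _ hpq]
  linarith [hmin _ (hF₂.1 hpq) hpqr]

end IsMSF

end

theorem msf_delete_tree_edge_general {V : Type} [DecidableEq V]
    (E F : Finset (Sym2 V)) (w : Sym2 V → ℝ)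
    (hnd : ∀ f ∈ E, ¬ f.IsDiag)
    (hF : IsMSF V w E F)
    (u v : V) (e : Sym2 V) (he : e = s(u, v)) (heF : e ∈ F) :
    (∀ f₀ ∈ E.erase e,
      (∃ a b : V, f₀ = s(a, b) ∧
        (SimpleGraph.fromEdgeSet (↑(F.erase e) : Set (Sym2 V))).Reachable u a ∧
        (SimpleGraph.fromEdgeSet (↑(F.erase e) : Set (Sym2 V))).Reachable v b) →
      (∀ g ∈ E.erase e,
        (∃ a b : V, g = s(a, b) ∧
          (SimpleGraph.fromEdgeSet (↑(F.erase e) : Set (Sym2 V))).Reachable u a ∧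
          (SimpleGraph.fromEdgeSet (↑(F.erase e) : Set (Sym2 V))).Reachable v b) →
        w f₀ ≤ w g) →
      IsMSF V w (E.erase e) (insert f₀ (F.erase e))) ∧
    ((∀ g ∈ E.erase e,
        ¬ (∃ a b : V, g = s(a, b) ∧
          (SimpleGraph.fromEdgeSet (↑(F.erase e) : Set (Sym2 V))).Reachable u a ∧
          (SimpleGraph.fromEdgeSet (↑(F.erase e) : Set (Sym2 V))).Reachable v b)) →
      IsMSF V w (E.erase e) (F.erase e)) := by
  subst he
  have huv : u ≠ v := by simpa using hnd _ (hF.1.1 heF)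
  exact ⟨fun f₀ hf₀ hfr hmin => hF.insert_erase_of_reconnects heF huv hf₀ hfr hmin,
    hF.erase_of_forall_not_reconnects heF huv⟩

/-- Correctness of the minimum-weight replacement (MWR) edge rule for deleting a
tree edge `e = s(u,v)` of the MSF `F`: if a minimum-weight edge `f₀` of `G ∖ {e}`
reconnecting the two components `T₀` (containing `u`) and `T₁` (containing `v`) of
`F ∖ {e}` exists, the new MSF is `(F ∖ {e}) ∪ {f₀}`; otherwise it is `F ∖ {e}`. -/
theorem msf_delete_tree_edge {V : Type} [Fintype V] [DecidableEq V]
    (E F : Finset (Sym2 V)) (w : Sym2 V → ℝ)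
    (hinj : Set.InjOn w (↑E : Set (Sym2 V)))
    (hnd : ∀ f ∈ E, ¬ f.IsDiag)
    (hF : IsMSF V w E F)
    (u v : V) (e : Sym2 V) (he : e = s(u, v)) (heF : e ∈ F) :
    (∀ f₀ ∈ E.erase e,
      (∃ a b : V, f₀ = s(a, b) ∧
        (SimpleGraph.fromEdgeSet (↑(F.erase e) : Set (Sym2 V))).Reachable u a ∧
        (SimpleGraph.fromEdgeSet (↑(F.erase e) : Set (Sym2 V))).Reachable v b) →
      (∀ g ∈ E.erase e,
        (∃ a b : V, g = s(a, b) ∧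
          (SimpleGraph.fromEdgeSet (↑(F.erase e) : Set (Sym2 V))).Reachable u a ∧
          (SimpleGraph.fromEdgeSet (↑(F.erase e) : Set (Sym2 V))).Reachable v b) →
        w f₀ ≤ w g) →
      IsMSF V w (E.erase e) (insert f₀ (F.erase e))) ∧
    ((∀ g ∈ E.erase e,
        ¬ (∃ a b : V, g = s(a, b) ∧
          (SimpleGraph.fromEdgeSet (↑(F.erase e) : Set (Sym2 V))).Reachable u a ∧
          (SimpleGraph.fromEdgeSet (↑(F.erase e) : Set (Sym2 V))).Reachable v b)) →
      IsMSF V w (E.erase e) (F.erase e)) :=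
  msf_delete_tree_edge_general E F w hnd hF u v e he heF
end

section
/- Let G be a finite weighted graph with distinct edge weights and minimum spanning forest F, and let e = (u,v) be a new edge with endpoints in the same tree of F. If w(e) is less than the maximum weight w(e') among edges on the unique u–v path in F, then the minimum spanning forest of G ∪ {e} equals (F ∖ {e'}) ∪ {e}; if w(e) exceeds all weights on that path, the minimum spanning forest of G ∪ {e} equals F. -/
/-! Let `T` be any spanning forest of `E ∪ {e}`. If `e ∉ T`, then `T` spans `E` and
`w F ≤ w T`. If `e ∈ T`, deleting `e` separates `u` from `v`; the path `p` crosses this cut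
along an edge `f`, and `T - e + f` spans `E`, whence `w F + w e ≤ w T + w f`. As `w f ≤ w e'`
(resp. `w f < w e`), `w T` is at least the weight of the claimed forest. The same exchange shows
that `F - e' + e` is a spanning forest: `e'` lies on the unique `u`–`v` path of `F`, so deleting
it separates `u` from `v`, and `e` joins the two sides. -/

open SimpleGraph

namespace SimpleGraph

variable {V : Type*} {G H : SimpleGraph V} {a b x y : V}

theorem Reachable.of_sup_edge (h : (H ⊔ edge a b).Reachable x y) :
    H.Reachable x y ∨ (H.Reachable x a ∧ H.Reachable b y) ∨
      (H.Reachable x b ∧ H.Reachable a y) := by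
  obtain ⟨q⟩ := h
  induction q with
  | nil => exact .inl .rfl
  | cons hadj _ ih =>
    rw [sup_adj, edge_adj] at hadj
    rcases hadj with hadj | ⟨⟨rfl, rfl⟩ | ⟨rfl, rfl⟩, -⟩ <;>
      grind [Adj.reachable, Reachable.trans, Reachable.symm, Reachable.refl]

theorem reachable_sup_edge_of_reachable (h : G.Reachable a b) :
    (G ⊔ edge a b).Reachable = G.Reachable := by
  ext x y
  refine ⟨fun hxy => ?_, .mono le_sup_left⟩
  rcases hxy.of_sup_edge with hxy | ⟨hxa, hby⟩ | ⟨hxb, hay⟩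
  · exact hxy
  · exact hxa.trans (h.trans hby)
  · exact hxb.trans (h.symm.trans hay)

theorem reachable_sup_edge_eq_of_not_reachable (hxy : ¬ H.Reachable x y)
    (hab : (H ⊔ edge a b).Reachable x y) :
    (H ⊔ edge x y).Reachable = (H ⊔ edge a b).Reachable := by
  have hne : x ≠ y := fun h => hxy (h ▸ .rfl)
  have hxy' : (H ⊔ edge x y).Reachable x y := Adj.reachable (by simp [edge_adj, hne])
  have hab' : (H ⊔ edge x y).Reachable a b := by
    rcases hab.of_sup_edge with h | ⟨hxa, hby⟩ | ⟨hxb, hay⟩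
    · exact absurd h hxy
    · exact (hxa.symm.mono le_sup_left).trans (hxy'.trans (hby.symm.mono le_sup_left))
    · exact (hay.mono le_sup_left).trans (hxy'.symm.trans (hxb.mono le_sup_left))
  rw [← reachable_sup_edge_of_reachable hab', ← reachable_sup_edge_of_reachable hab,
    sup_right_comm]

theorem IsAcyclic.not_reachable_deleteEdges_of_mem_edges_s5 (hG : G.IsAcyclic) {p : G.Walk x y}
    (hp : p.IsPath) {e : Sym2 V} (he : e ∈ p.edges) : ¬ (G.deleteEdges {e}).Reachable x y := by
  classical
  rintro ⟨q⟩
  let r := q.mapLe (G.deleteEdges_le {e})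
  have hpr : p = r.bypass :=
    congrArg Subtype.val ((hG.subsingleton_path x y).elim ⟨p, hp⟩ ⟨r.bypass, r.bypass_isPath⟩)
  have heq : e ∈ q.edges := by
    rw [← Walk.edges_mapLe_eq_edges (G.deleteEdges_le {e})]
    exact r.edges_bypass_subset_edges (hpr ▸ he)
  simpa using q.edges_subset_edgeSet heq

theorem Walk.mem_of_mem_edges {S : Set (Sym2 V)} (p : (fromEdgeSet S).Walk x y) {e : Sym2 V}
    (he : e ∈ p.edges) : e ∈ S :=
  (edgeSet_fromEdgeSet S ▸ p.edges_subset_edgeSet he).1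

end SimpleGraph

section EdgeFinsets

variable {V : Type} [DecidableEq V]

theorem fromEdgeSet_coe_insert (S : Finset (Sym2 V)) (u v : V) :
    fromEdgeSet (↑(insert s(u, v) S) : Set (Sym2 V)) = fromEdgeSet ↑S ⊔ edge u v := by
  rw [Finset.coe_insert, Set.insert_eq, fromEdgeSet_union, sup_comm, edge]

theorem fromEdgeSet_coe_erase (S : Finset (Sym2 V)) (e : Sym2 V) :
    fromEdgeSet (↑(S.erase e) : Set (Sym2 V)) = (fromEdgeSet ↑S).deleteEdges {e} := by
  rw [Finset.coe_erase, deleteEdges_fromEdgeSet]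

theorem reachable_fromEdgeSet_insert {E : Finset (Sym2 V)} {u v : V}
    (huv : (fromEdgeSet (↑E : Set (Sym2 V))).Reachable u v) :
    (fromEdgeSet (↑(insert s(u, v) E) : Set (Sym2 V))).Reachable =
      (fromEdgeSet (↑E : Set (Sym2 V))).Reachable := by
  rw [fromEdgeSet_coe_insert, reachable_sup_edge_of_reachable huv]

namespace IsSpanningForest

variable {E T : Finset (Sym2 V)} {u v : V}

theorem insert_edge (hT : IsSpanningForest V E T)
    (huv : (fromEdgeSet (↑E : Set (Sym2 V))).Reachable u v) :
    IsSpanningForest V (insert s(u, v) E) T :=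
  ⟨hT.1.trans (Finset.subset_insert _ _), hT.2.1, by
    rw [reachable_fromEdgeSet_insert huv]; exact hT.2.2⟩

theorem of_insert_edge (hT : IsSpanningForest V (insert s(u, v) E) T) (huvT : s(u, v) ∉ T)
    (huv : (fromEdgeSet (↑E : Set (Sym2 V))).Reachable u v) : IsSpanningForest V E T :=
  ⟨(Finset.subset_insert_iff_of_notMem huvT).mp hT.1, hT.2.1, by
    rw [← reachable_fromEdgeSet_insert huv]; exact hT.2.2⟩

theorem exchange_s5 (hT : IsSpanningForest V E T) {g : Sym2 V} (hg : g ∈ T) {x y : V}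
    (hxyE : s(x, y) ∈ E) (hxy : ¬ (fromEdgeSet (↑(T.erase g) : Set (Sym2 V))).Reachable x y) :
    IsSpanningForest V E (insert s(x, y) (T.erase g)) := by
  obtain ⟨hTE, hTacyc, hTreach⟩ := hT
  induction g using Sym2.ind with | _ a b =>
  have hTab : fromEdgeSet (↑T : Set (Sym2 V)) = fromEdgeSet ↑(T.erase s(a, b)) ⊔ edge a b := by
    rw [← fromEdgeSet_coe_insert, Finset.insert_erase hg]
  have hxyT : (fromEdgeSet (↑T : Set (Sym2 V))).Reachable x y := by
    refine (hTreach x y).mp (Adj.reachable ((fromEdgeSet_adj _).mpr ⟨hxyE, ?_⟩))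
    rintro rfl
    exact hxy .rfl
  refine ⟨Finset.insert_subset hxyE ((T.erase_subset _).trans hTE), ?_, fun c d => ?_⟩
  · rw [fromEdgeSet_coe_insert]
    exact IsAcyclic.sup_edge_of_not_reachable hxy
      (hTacyc.anti (fromEdgeSet_mono (Finset.coe_subset.mpr (T.erase_subset _))))
  · rw [fromEdgeSet_coe_insert, reachable_sup_edge_eq_of_not_reachable hxy (hTab ▸ hxyT), ← hTab]
    exact hTreach c d

theorem exists_exchange (hT : IsSpanningForest V (insert s(u, v) E) T) (huv : u ≠ v)
    (huvT : s(u, v) ∈ T) (huvE : s(u, v) ∉ E) (p : (fromEdgeSet (↑E : Set (Sym2 V))).Walk u v) :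
    ∃ f ∈ p.edges, f ∉ T.erase s(u, v) ∧ IsSpanningForest V E (insert f (T.erase s(u, v))) := by
  have hsep : ¬ (fromEdgeSet (↑(T.erase s(u, v)) : Set (Sym2 V))).Reachable u v := by
    rw [fromEdgeSet_coe_erase, ← isBridge_iff]
    exact isAcyclic_iff_forall_adj_isBridge.mp hT.2.1 ((fromEdgeSet_adj _).mpr ⟨huvT, huv⟩)
  set H := fromEdgeSet (↑(T.erase s(u, v)) : Set (Sym2 V))
  obtain ⟨d, hd, hx, hy⟩ := p.exists_boundary_dart {z | H.Reachable u z} .rfl hsep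
  have hdp : d.edge ∈ p.edges := by rw [Walk.edges_eq_map_darts]; exact List.mem_map_of_mem hd
  have hdE : d.edge ∈ E := p.mem_of_mem_edges hdp
  have hdsep : ¬ H.Reachable d.fst d.snd := fun h => hy (Reachable.trans hx h)
  refine ⟨d.edge, hdp, fun hdT => hdsep (Adj.reachable ((fromEdgeSet_adj _).mpr ⟨hdT, d.adj.ne⟩)),
    ?_⟩
  refine (hT.exchange_s5 huvT (Finset.mem_insert_of_mem hdE) hdsep).of_insert_edge ?_ ⟨p⟩
  rw [Finset.mem_insert, not_or]
  exact ⟨fun h => huvE (h ▸ hdE), T.notMem_erase _⟩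

end IsSpanningForest

theorem IsMSF.sum_le_or_exists_exchange {w : Sym2 V → ℝ} {E F T : Finset (Sym2 V)} {u v : V}
    (hF : IsMSF V w E F) (huv : u ≠ v) (huvE : s(u, v) ∉ E)
    (p : (fromEdgeSet (↑E : Set (Sym2 V))).Walk u v)
    (hT : IsSpanningForest V (insert s(u, v) E) T) :
    ∑ f ∈ F, w f ≤ ∑ f ∈ T, w f ∨ ∃ f ∈ p.edges, ∑ g ∈ F, w g + w s(u, v) ≤ ∑ g ∈ T, w g + w f := by
  by_cases huvT : s(u, v) ∈ T
  · obtain ⟨f, hfp, hfT, hT'⟩ := hT.exists_exchange huv huvT huvE p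
    refine .inr ⟨f, hfp, ?_⟩
    have hmin := hF.2 _ hT'
    rw [Finset.sum_insert hfT] at hmin
    linarith [Finset.sum_erase_add T w huvT]
  · exact .inl (hF.2 T (hT.of_insert_edge huvT ⟨p⟩))

end EdgeFinsets

theorem msf_insert_same_tree_general {V : Type} [DecidableEq V]
    (E F : Finset (Sym2 V)) (w : Sym2 V → ℝ)
    (hF : IsMSF V w E F)
    (u v : V) (huv : u ≠ v) (e : Sym2 V) (he : e = s(u, v)) (heE : e ∉ E)
    (p : (SimpleGraph.fromEdgeSet (↑F : Set (Sym2 V))).Walk u v) (hp : p.IsPath)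
    (e' : Sym2 V) (he'p : e' ∈ p.edges)
    (hmax : ∀ f ∈ p.edges, f ≠ e' → w f < w e') :
    (w e < w e' → IsMSF V w (insert e E) (insert e (F.erase e'))) ∧
    ((∀ f ∈ p.edges, w f < w e) → IsMSF V w (insert e E) F) := by
  subst he
  have hFE : fromEdgeSet (↑F : Set (Sym2 V)) ≤ fromEdgeSet ↑E :=
    fromEdgeSet_mono (Finset.coe_subset.mpr hF.1.1)
  have he'F : e' ∈ F := p.mem_of_mem_edges he'p
  have hFins := hF.1.insert_edge ⟨p.mapLe hFE⟩
  have hlower (T : Finset (Sym2 V)) (hT : IsSpanningForest V (insert s(u, v) E) T) :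
      ∑ f ∈ F, w f ≤ ∑ f ∈ T, w f ∨
        ∃ f ∈ p.edges, ∑ g ∈ F, w g + w s(u, v) ≤ ∑ g ∈ T, w g + w f := by
    simpa only [Walk.edges_mapLe_eq_edges] using
      hF.sum_le_or_exists_exchange huv heE (p.mapLe hFE) hT
  refine ⟨fun hw => ⟨?_, fun T hT => ?_⟩, fun hw => ⟨hFins, fun T hT => ?_⟩⟩
  · refine hFins.exchange_s5 he'F (E.mem_insert_self _) ?_
    rw [fromEdgeSet_coe_erase]
    exact hF.1.2.1.not_reachable_deleteEdges_of_mem_edges_s5 hp he'p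
  · rw [Finset.sum_insert fun h => heE (hF.1.1 (F.erase_subset _ h))]
    have hsum := Finset.sum_erase_add F w he'F
    rcases hlower T hT with h | ⟨f, hf, h⟩
    · linarith
    · have hfe' : w f ≤ w e' := by
        rcases eq_or_ne f e' with rfl | hne
        exacts [le_rfl, (hmax f hf hne).le]
      linarith
  · rcases hlower T hT with h | ⟨f, hf, h⟩
    · exact h
    · linarith [hw f hf]

/-- Inserting an edge `e = s(u,v)` whose endpoints lie in the same tree of the
MSF `F`: let `e'` be the heaviest edge on the unique `u`–`v` path `p` in `F`.
If `w e < w e'`, the new MSF is `(F ∖ {e'}) ∪ {e}`; if `w e` exceeds all weights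
on the path, the new MSF is `F`. -/
theorem msf_insert_same_tree {V : Type} [Fintype V] [DecidableEq V]
    (E F : Finset (Sym2 V)) (w : Sym2 V → ℝ)
    (hF : IsMSF V w E F)
    (u v : V) (huv : u ≠ v) (e : Sym2 V) (he : e = s(u, v)) (heE : e ∉ E)
    (hinj : Set.InjOn w (↑(insert e E) : Set (Sym2 V)))
    (hnd : ∀ f ∈ insert e E, ¬ f.IsDiag)
    (p : (SimpleGraph.fromEdgeSet (↑F : Set (Sym2 V))).Walk u v) (hp : p.IsPath)
    (e' : Sym2 V) (he'p : e' ∈ p.edges)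
    (hmax : ∀ f ∈ p.edges, f ≠ e' → w f < w e') :
    (w e < w e' → IsMSF V w (insert e E) (insert e (F.erase e'))) ∧
    ((∀ f ∈ p.edges, w f < w e) → IsMSF V w (insert e E) F) :=
  msf_insert_same_tree_general E F w hF u v huv e he heE p hp e' he'p hmax
end
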